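/- Let D ⊂ ℂ^n be a bounded, strongly ℂ-linearly convex C^{1,1} domain and K(w,z) = Δ(w,z)^{-n} with Δ(w,z) = ⟨∂ρ(w), w−z⟩. Then for w₁, w₂, z ∈ bD with d(w₁,z) ≥ c₁ d(w₁,w₂) (c₁ large enough): |K(w₁,z) − K(w₂,z)| ≲ d(w₁,z)^{-2n} · d(w₁,w₂)/d(w₁,z), and also |K(w,z)| ≲ d(w,z)^{-2n}. -/

import Mathlib

/-!
The Leray pairing is almost additive in its first variable:
`Δ(w₁,z) − Δ(w₂,z) = Δ(w₁,w₂) + ⟨∂ρ(w₁) − ∂ρ(w₂), w₂ − z⟩`. The Lipschitz bound on `∂ρ` and the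
convexity bound `|w − z| ≲ d(w,z)` turn this into
`|Δ(w₁,z) − Δ(w₂,z)| ≲ d(w₁,w₂)² + d(w₁,w₂) d(w₁,z)`, which for `d(w₁,z) ≥ c₁ d(w₁,w₂)` is at most
`|Δ(w₁,z)| / 2`. For complex numbers with `|x − y| ≤ |x| / 2` one has
`|x⁻ⁿ − y⁻ⁿ| ≲ |x|⁻ⁿ |x − y| / |x|`, and `|Δ| = d²` gives the regularity estimate; the size
estimate is the identity `|Δ⁻ⁿ| = d⁻²ⁿ`.
-/

/-- The Leray pairing `Δ(w,z) = ⟨∂ρ(w), w−z⟩`. -/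
noncomputable def cplxPair {n : ℕ}
    (pc : EuclideanSpace ℂ (Fin n) → EuclideanSpace ℂ (Fin n))
    (w z : EuclideanSpace ℂ (Fin n)) : ℂ :=
  ∑ j, pc w j * (w j - z j)

/-- The quasi-distance `d(w,z) = |Δ(w,z)|^{1/2}`. -/
noncomputable def lerayDist {n : ℕ}
    (pc : EuclideanSpace ℂ (Fin n) → EuclideanSpace ℂ (Fin n))
    (w z : EuclideanSpace ℂ (Fin n)) : ℝ :=
  Real.sqrt ‖cplxPair pc w z‖

theorem norm_pow_sub_pow_le {R : Type*} [SeminormedCommRing R] [NormOneClass R]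
    (a b : R) (n : ℕ) : ‖a ^ n - b ^ n‖ ≤ ‖a - b‖ * n * max ‖a‖ ‖b‖ ^ (n - 1) := by
  rw [← geom_sum₂_mul, mul_comm, mul_assoc]
  refine (norm_mul_le _ _).trans (mul_le_mul_of_nonneg_left ?_ (norm_nonneg _))
  calc ‖∑ i ∈ Finset.range n, a ^ i * b ^ (n - 1 - i)‖
      ≤ ∑ i ∈ Finset.range n, ‖a ^ i * b ^ (n - 1 - i)‖ := norm_sum_le _ _
    _ ≤ ∑ _i ∈ Finset.range n, max ‖a‖ ‖b‖ ^ (n - 1) := Finset.sum_le_sum fun i hi => by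
        have hi : i ≤ n - 1 := Nat.le_sub_one_of_lt (Finset.mem_range.mp hi)
        calc ‖a ^ i * b ^ (n - 1 - i)‖ ≤ ‖a‖ ^ i * ‖b‖ ^ (n - 1 - i) :=
              (norm_mul_le _ _).trans (mul_le_mul (norm_pow_le _ _) (norm_pow_le _ _)
                (norm_nonneg _) (by positivity))
          _ ≤ max ‖a‖ ‖b‖ ^ i * max ‖a‖ ‖b‖ ^ (n - 1 - i) := by gcongr <;> simp
          _ = max ‖a‖ ‖b‖ ^ (n - 1) := by rw [← pow_add, Nat.add_sub_cancel' hi]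
    _ = n * max ‖a‖ ‖b‖ ^ (n - 1) := by simp

theorem norm_zpow_neg_sub_zpow_neg_le {𝕜 : Type*} [NormedField 𝕜] {x y : 𝕜} (n : ℕ)
    (hxy : ‖x - y‖ ≤ ‖x‖ / 2) :
    ‖x ^ (-(n : ℤ)) - y ^ (-(n : ℤ))‖ ≤
      n * 2 ^ (n + 1) * ‖x ^ (-(n : ℤ))‖ * (‖x - y‖ / ‖x‖) := by
  rcases eq_or_ne x 0 with rfl | hx
  · obtain rfl : y = 0 := by simpa using hxy
    simp
  have hx_pos : 0 < ‖x‖ := norm_pos_iff.mpr hx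
  have hy_ge : ‖x‖ / 2 ≤ ‖y‖ := by linarith [norm_sub_norm_le x y]
  have hy : y ≠ 0 := norm_pos_iff.mp (by linarith)
  have hq : ‖x / y‖ ≤ 2 := by
    rw [norm_div, div_le_iff₀ (by linarith)]
    linarith
  have h1q : ‖1 - x / y‖ ≤ 2 * (‖x - y‖ / ‖x‖) := by
    rw [one_sub_div hy, norm_div, norm_sub_rev, div_le_iff₀ (by linarith)]
    calc ‖x - y‖ = 2 * (‖x - y‖ / ‖x‖) * (‖x‖ / 2) := by field_simp
      _ ≤ 2 * (‖x - y‖ / ‖x‖) * ‖y‖ := by gcongr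
  have hsplit : x ^ (-(n : ℤ)) - y ^ (-(n : ℤ)) = x ^ (-(n : ℤ)) * (1 ^ n - (x / y) ^ n) := by
    rw [one_pow, div_pow, zpow_neg, zpow_neg, zpow_natCast, zpow_natCast]
    field_simp
  rw [hsplit, norm_mul]
  calc ‖x ^ (-(n : ℤ))‖ * ‖1 ^ n - (x / y) ^ n‖
      ≤ ‖x ^ (-(n : ℤ))‖ * (‖1 - x / y‖ * n * max ‖(1 : 𝕜)‖ ‖x / y‖ ^ (n - 1)) := by
        gcongr; exact norm_pow_sub_pow_le _ _ _
    _ ≤ ‖x ^ (-(n : ℤ))‖ * (2 * (‖x - y‖ / ‖x‖) * n * 2 ^ n) := by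
        gcongr
        calc max ‖(1 : 𝕜)‖ ‖x / y‖ ^ (n - 1) ≤ 2 ^ (n - 1) := by
              gcongr; exact max_le (by norm_num) hq
          _ ≤ 2 ^ n := pow_le_pow_right₀ one_le_two (Nat.sub_le n 1)
    _ = n * 2 ^ (n + 1) * ‖x ^ (-(n : ℤ))‖ * (‖x - y‖ / ‖x‖) := by ring

theorem EuclideanSpace.norm_sum_mul_le {𝕜 ι : Type*} [RCLike 𝕜] [Fintype ι]
    (a b : EuclideanSpace 𝕜 ι) : ‖∑ j, a j * b j‖ ≤ ‖a‖ * ‖b‖ := by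
  calc ‖∑ j, a j * b j‖ ≤ ∑ j, ‖a j‖ * ‖b j‖ := by
        simpa only [norm_mul] using norm_sum_le Finset.univ fun j => a j * b j
    _ ≤ √(∑ j, ‖a j‖ ^ 2) * √(∑ j, ‖b j‖ ^ 2) := Real.sum_mul_le_sqrt_mul_sqrt _ _ _
    _ = ‖a‖ * ‖b‖ := by rw [EuclideanSpace.norm_eq, EuclideanSpace.norm_eq]

section LerayPairing

variable {n : ℕ} {pc : EuclideanSpace ℂ (Fin n) → EuclideanSpace ℂ (Fin n)}

theorem lerayDist_sq (w z : EuclideanSpace ℂ (Fin n)) :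
    lerayDist pc w z ^ 2 = ‖cplxPair pc w z‖ :=
  Real.sq_sqrt (norm_nonneg _)

theorem norm_cplxPair_zpow_neg (m : ℕ) (w z : EuclideanSpace ℂ (Fin n)) :
    ‖cplxPair pc w z ^ (-(m : ℤ))‖ = lerayDist pc w z ^ (-(2 * (m : ℝ))) := by
  rw [lerayDist, Real.sqrt_eq_rpow, ← Real.rpow_mul (norm_nonneg _), norm_zpow,
    ← Real.rpow_intCast]
  congr 1
  push_cast
  ring

theorem sqrt_mul_norm_sub_le_lerayDist {c₀ : ℝ} (hc₀ : 0 ≤ c₀) {w z : EuclideanSpace ℂ (Fin n)}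
    (h : c₀ * ‖w - z‖ ^ 2 ≤ ‖cplxPair pc w z‖) : √c₀ * ‖w - z‖ ≤ lerayDist pc w z := by
  rwa [lerayDist, Real.le_sqrt (by positivity) (norm_nonneg _), mul_pow, Real.sq_sqrt hc₀]

theorem cplxPair_sub_cplxPair (w₁ w₂ z : EuclideanSpace ℂ (Fin n)) :
    cplxPair pc w₁ z - cplxPair pc w₂ z =
      cplxPair pc w₁ w₂ + ∑ j, (pc w₁ - pc w₂) j * (w₂ - z) j := by
  simp only [cplxPair, ← Finset.sum_sub_distrib, ← Finset.sum_add_distrib]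
  refine Finset.sum_congr rfl fun j _ => ?_
  simp only [PiLp.sub_apply]
  ring

theorem norm_cplxPair_sub_cplxPair_le {K : NNReal} (hpc : LipschitzWith K pc)
    (w₁ w₂ z : EuclideanSpace ℂ (Fin n)) :
    ‖cplxPair pc w₁ z - cplxPair pc w₂ z‖ ≤
      ‖cplxPair pc w₁ w₂‖ + K * ‖w₁ - w₂‖ * ‖w₂ - z‖ := by
  rw [cplxPair_sub_cplxPair]
  refine (norm_add_le _ _).trans (add_le_add le_rfl ?_)
  refine (EuclideanSpace.norm_sum_mul_le _ _).trans (mul_le_mul_of_nonneg_right ?_ (norm_nonneg _))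
  simpa only [dist_eq_norm] using hpc.dist_le_mul w₁ w₂

theorem norm_cplxPair_sub_cplxPair_le_lerayDist {K : NNReal} (hpc : LipschitzWith K pc)
    {c₀ : ℝ} (hc₀ : 0 < c₀) {w₁ w₂ z : EuclideanSpace ℂ (Fin n)}
    (h₁₂ : c₀ * ‖w₁ - w₂‖ ^ 2 ≤ ‖cplxPair pc w₁ w₂‖)
    (h₁z : c₀ * ‖w₁ - z‖ ^ 2 ≤ ‖cplxPair pc w₁ z‖) :
    ‖cplxPair pc w₁ z - cplxPair pc w₂ z‖ ≤
      (1 + K / c₀) * (lerayDist pc w₁ w₂ ^ 2 + lerayDist pc w₁ w₂ * lerayDist pc w₁ z) := by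
  have he := sqrt_mul_norm_sub_le_lerayDist hc₀.le h₁₂
  have hd := sqrt_mul_norm_sub_le_lerayDist hc₀.le h₁z
  have he₀ : 0 ≤ lerayDist pc w₁ w₂ := Real.sqrt_nonneg _
  have hd₀ : 0 ≤ lerayDist pc w₁ z := Real.sqrt_nonneg _
  have htri : ‖w₂ - z‖ ≤ ‖w₁ - w₂‖ + ‖w₁ - z‖ := by
    simpa only [sub_sub_sub_cancel_left, add_comm] using norm_sub_le (w₁ - z) (w₁ - w₂)
  have hlip : K * ‖w₁ - w₂‖ * ‖w₂ - z‖ ≤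
      K / c₀ * (lerayDist pc w₁ w₂ ^ 2 + lerayDist pc w₁ w₂ * lerayDist pc w₁ z) :=
    calc K * ‖w₁ - w₂‖ * ‖w₂ - z‖ ≤ K * ‖w₁ - w₂‖ * (‖w₁ - w₂‖ + ‖w₁ - z‖) := by gcongr
      _ = K / c₀ * ((√c₀ * ‖w₁ - w₂‖) ^ 2 + √c₀ * ‖w₁ - w₂‖ * (√c₀ * ‖w₁ - z‖)) := by
          field_simp
          rw [Real.sq_sqrt hc₀.le]
      _ ≤ _ := by gcongr
  have := norm_cplxPair_sub_cplxPair_le hpc w₁ w₂ z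
  rw [← lerayDist_sq] at this
  linarith [mul_nonneg he₀ hd₀]

end LerayPairing

theorem cauchy_leray_kernel_estimates_general (n : ℕ) (hn : 2 ≤ n)
    (ρ : EuclideanSpace ℂ (Fin n) → ℝ)
    (pc : EuclideanSpace ℂ (Fin n) → EuclideanSpace ℂ (Fin n))
    (Kpc : NNReal) (hpcLip : LipschitzWith Kpc pc)
    (c₀ : ℝ) (hc₀ : 0 < c₀)
    (hconv : ∀ z, ρ z ≤ 0 → ∀ w, ρ w = 0 →
      c₀ * ‖w - z‖ ^ 2 ≤ ‖cplxPair pc w z‖) :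
    ∃ C c₁ : ℝ, 0 < C ∧ 1 ≤ c₁ ∧
      (∀ w z, ρ w = 0 → ρ z = 0 → w ≠ z →
        ‖cplxPair pc w z ^ (-(n : ℤ))‖ ≤ C * lerayDist pc w z ^ (-(2 * (n : ℝ)))) ∧
      (∀ w₁ w₂ z, ρ w₁ = 0 → ρ w₂ = 0 → ρ z = 0 →
        c₁ * lerayDist pc w₁ w₂ ≤ lerayDist pc w₁ z →
        ‖cplxPair pc w₁ z ^ (-(n : ℤ)) - cplxPair pc w₂ z ^ (-(n : ℤ))‖ ≤
          C * lerayDist pc w₁ z ^ (-(2 * (n : ℝ))) *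
            (lerayDist pc w₁ w₂ / lerayDist pc w₁ z)) := by
  set B : ℝ := 1 + Kpc / c₀
  have hB : 1 ≤ B := le_add_of_nonneg_right (by positivity)
  have hC : 1 ≤ B * n * 2 ^ (n + 2) :=
    one_le_mul_of_one_le_of_one_le (one_le_mul_of_one_le_of_one_le hB (by norm_cast; omega))
      (one_le_pow₀ one_le_two)
  refine ⟨B * n * 2 ^ (n + 2), 4 * B, by positivity, by linarith, fun w z _ _ _ => ?_, ?_⟩
  · rw [← norm_cplxPair_zpow_neg]
    exact le_mul_of_one_le_left (norm_nonneg _) hC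
  intro w₁ w₂ z hw₁ hw₂ hz hfar
  set e := lerayDist pc w₁ w₂
  set d := lerayDist pc w₁ z
  have he₀ : 0 ≤ e := Real.sqrt_nonneg _
  have hd₀ : 0 ≤ d := Real.sqrt_nonneg _
  have hΔ₁ : ‖cplxPair pc w₁ z‖ = d ^ 2 := (lerayDist_sq w₁ z).symm
  have hkey := norm_cplxPair_sub_cplxPair_le_lerayDist hpcLip hc₀
    (hconv w₂ hw₂.le w₁ hw₁) (hconv z hz.le w₁ hw₁)
  have hed : e ≤ d := by nlinarith
  have hdiff : ‖cplxPair pc w₁ z - cplxPair pc w₂ z‖ ≤ 2 * B * e * d := by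
    nlinarith [mul_nonneg (mul_nonneg (by linarith : (0 : ℝ) ≤ B) he₀) (sub_nonneg.2 hed)]
  have hhalf : ‖cplxPair pc w₁ z - cplxPair pc w₂ z‖ ≤ ‖cplxPair pc w₁ z‖ / 2 := by
    rw [hΔ₁]
    nlinarith [mul_le_mul_of_nonneg_right hfar hd₀]
  have hratio : ‖cplxPair pc w₁ z - cplxPair pc w₂ z‖ / ‖cplxPair pc w₁ z‖ ≤ 2 * B * (e / d) := by
    rcases hd₀.eq_or_lt with hd | hd
    · simp [hΔ₁, ← hd]
    rw [hΔ₁, div_le_iff₀ (by positivity)]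
    calc _ ≤ 2 * B * e * d := hdiff
      _ = 2 * B * (e / d) * d ^ 2 := by field_simp
  calc _ ≤ n * 2 ^ (n + 1) * ‖cplxPair pc w₁ z ^ (-(n : ℤ))‖ *
        (‖cplxPair pc w₁ z - cplxPair pc w₂ z‖ / ‖cplxPair pc w₁ z‖) :=
        norm_zpow_neg_sub_zpow_neg_le n hhalf
    _ ≤ n * 2 ^ (n + 1) * ‖cplxPair pc w₁ z ^ (-(n : ℤ))‖ * (2 * B * (e / d)) := by gcongr
    _ = _ := by rw [norm_cplxPair_zpow_neg]; ring

/-- Size and regularity estimates for the Cauchy–Leray kernel `K(w,z) = Δ(w,z)^{-n}`: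
`|K(w,z)| ≲ d(w,z)^{-2n}` and, for `d(w₁,z) ≥ c₁ d(w₁,w₂)` with `c₁` large enough,
`|K(w₁,z) − K(w₂,z)| ≲ d(w₁,z)^{-2n}·d(w₁,w₂)/d(w₁,z)`. -/
theorem cauchy_leray_kernel_estimates (n : ℕ) (hn : 2 ≤ n)
    (ρ : EuclideanSpace ℂ (Fin n) → ℝ)
    (D : Set (EuclideanSpace ℂ (Fin n)))
    (hD : D = {z | ρ z < 0}) (hbdd : Bornology.IsBounded D)
    (hρ1 : ContDiff ℝ 1 ρ)
    (pc : EuclideanSpace ℂ (Fin n) → EuclideanSpace ℂ (Fin n))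
    (hpc : ∀ w v, fderiv ℝ ρ w v = 2 * (∑ j, pc w j * v j).re)
    (Kpc : NNReal) (hpcLip : LipschitzWith Kpc pc)
    (hgrad : ∀ w, ρ w = 0 → fderiv ℝ ρ w ≠ 0)
    (c₀ : ℝ) (hc₀ : 0 < c₀)
    (hconv : ∀ z, ρ z ≤ 0 → ∀ w, ρ w = 0 →
      c₀ * ‖w - z‖ ^ 2 ≤ ‖cplxPair pc w z‖) :
    ∃ C c₁ : ℝ, 0 < C ∧ 1 ≤ c₁ ∧
      (∀ w z, ρ w = 0 → ρ z = 0 → w ≠ z →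
        ‖cplxPair pc w z ^ (-(n : ℤ))‖ ≤ C * lerayDist pc w z ^ (-(2 * (n : ℝ)))) ∧
      (∀ w₁ w₂ z, ρ w₁ = 0 → ρ w₂ = 0 → ρ z = 0 →
        c₁ * lerayDist pc w₁ w₂ ≤ lerayDist pc w₁ z →
        ‖cplxPair pc w₁ z ^ (-(n : ℤ)) - cplxPair pc w₂ z ^ (-(n : ℤ))‖ ≤
          C * lerayDist pc w₁ z ^ (-(2 * (n : ℝ))) *
            (lerayDist pc w₁ w₂ / lerayDist pc w₁ z)) :=
  cauchy_leray_kernel_estimates_general n hn ρ pc Kpc hpcLip c₀ hc₀ hconv
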